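/- arXiv:0904.3853 — 6 statements merged into one kernel-verified Lean document; each statement's English description precedes it below -/
import Mathlib

section
/- Let f : ℤ_p \ {0} → ℚ_p be f(x) = p^{-v(x)}. For any subset A ⊆ ℤ_p \ {0} on which the valuation v is unbounded above, the restriction of f to A is not Lipschitz continuous for any constant. Consequently, for every finite partition of ℤ_p \ {0}, there is a piece on which f is not Lipschitz continuous. -/
/-!
A function whose norm is unbounded on a bounded set cannot be Lipschitz there, by the reverse
triangle inequality. Here `‖f x‖ = p ^ v(x)`, so `‖f‖` is unbounded wherever `v` is, while all of
`ℤ_[p]` has diameter at most `1`. Among finitely many pieces covering `ℤ_[p] \ {0}`, on which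
`v(p ^ k) = k` is unbounded, some piece must carry an unbounded valuation.
-/

open Set

theorem exists_mul_norm_sub_lt_of_norm_unbounded {X E : Type*} [SeminormedAddGroup X]
    [SeminormedAddCommGroup E] {A : Set X} {f : X → E} {D : ℝ}
    (hA : ∀ x ∈ A, ∀ y ∈ A, ‖x - y‖ ≤ D) (hf : ∀ M : ℝ, ∃ x ∈ A, M < ‖f x‖) (C : ℝ) :
    ∃ x ∈ A, ∃ y ∈ A, C * ‖x - y‖ < ‖f x - f y‖ := by
  obtain ⟨y, hyA, -⟩ := hf 0
  obtain ⟨x, hxA, hx⟩ := hf (|C| * D + ‖f y‖)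
  refine ⟨x, hxA, y, hyA, ?_⟩
  calc C * ‖x - y‖ ≤ |C| * ‖x - y‖ := mul_le_mul_of_nonneg_right (le_abs_self C) (norm_nonneg _)
    _ ≤ |C| * D := mul_le_mul_of_nonneg_left (hA x hxA y hyA) (abs_nonneg C)
    _ < ‖f x‖ - ‖f y‖ := by linarith
    _ ≤ ‖f x - f y‖ := norm_sub_norm_le _ _

theorem exists_lt_zpow_of_forall_exists_lt {X : Type*} {A : Set X} {g : X → ℤ}
    (hg : ∀ N : ℤ, ∃ x ∈ A, N < g x) {b : ℝ} (hb : 1 < b) (M : ℝ) : ∃ x ∈ A, M < b ^ g x := by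
  obtain ⟨n, hn⟩ := pow_unbounded_of_one_lt M hb
  obtain ⟨x, hxA, hx⟩ := hg n
  refine ⟨x, hxA, hn.trans ?_⟩
  simpa only [zpow_natCast] using zpow_lt_zpow_right₀ hb hx

theorem exists_forall_exists_lt_of_finite_cover {ι X β : Type*} [Finite ι] [LinearOrder β]
    [Nonempty β] (g : X → β) {S : Set X} {P : ι → Set X} (hS : ∀ N : β, ∃ x ∈ S, N < g x)
    (hcover : ∀ x ∈ S, ∃ i, x ∈ P i) : ∃ i, ∀ N : β, ∃ x ∈ P i, N < g x := by
  by_contra! hbdd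
  have hunion : BddAbove (⋃ i ∈ univ, g '' P i) :=
    finite_univ.bddAbove_biUnion.2 fun i _ ↦
      let ⟨N, hN⟩ := hbdd i
      ⟨N, forall_mem_image.2 hN⟩
  obtain ⟨N, hN⟩ := hunion
  obtain ⟨x, hxS, hx⟩ := hS N
  obtain ⟨i, hi⟩ := hcover x hxS
  exact (hN (mem_biUnion (mem_univ i) (mem_image_of_mem g hi))).not_gt hx

theorem PadicInt.exists_ne_zero_lt_valuation {p : ℕ} [Fact p.Prime] (N : ℤ) :
    ∃ x : ℤ_[p], x ≠ 0 ∧ N < x.valuation := by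
  refine ⟨(p : ℤ_[p]) ^ (N.toNat + 1), pow_ne_zero _ (NeZero.ne _), ?_⟩
  rw [valuation_pow, valuation_p]
  omega

/-- For `f(x) = p^{-v(x)}` on `ℤ_p \ {0}`: on any subset `A` on which the
valuation is unbounded above, `f` is not Lipschitz for any constant; consequently, for
every finite partition of `ℤ_p \ {0}` there is a piece on which `f` is not Lipschitz. -/
theorem stmt3 (p : ℕ) [Fact p.Prime] (f : ℤ_[p] → ℚ_[p])
    (hf : ∀ x : ℤ_[p], x ≠ 0 → f x = (p : ℚ_[p]) ^ (-(x.valuation : ℤ))) :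
    (∀ A : Set ℤ_[p], (∀ x ∈ A, x ≠ 0) → (∀ N : ℤ, ∃ x ∈ A, N < x.valuation) →
      ∀ C : ℝ, ∃ x ∈ A, ∃ y ∈ A, C * ‖x - y‖ < ‖f x - f y‖) ∧
    (∀ (n : ℕ) (P : Fin n → Set ℤ_[p]), (∀ i, ∀ x ∈ P i, x ≠ 0) →
      (∀ x : ℤ_[p], x ≠ 0 → ∃ i, x ∈ P i) →
      ∃ i, ∀ C : ℝ, ∃ x ∈ P i, ∃ y ∈ P i, C * ‖x - y‖ < ‖f x - f y‖) := by
  have hp : (1 : ℝ) < p := mod_cast (Fact.out : p.Prime).one_lt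
  have not_lipschitz : ∀ A : Set ℤ_[p], (∀ x ∈ A, x ≠ 0) →
      (∀ N : ℤ, ∃ x ∈ A, N < x.valuation) →
      ∀ C : ℝ, ∃ x ∈ A, ∃ y ∈ A, C * ‖x - y‖ < ‖f x - f y‖ := by
    intro A hA hv
    refine exists_mul_norm_sub_lt_of_norm_unbounded (fun x _ y _ ↦ PadicInt.norm_le_one _)
      fun M ↦ ?_
    obtain ⟨x, hxA, hx⟩ := exists_lt_zpow_of_forall_exists_lt hv hp M
    refine ⟨x, hxA, ?_⟩
    rwa [hf x (hA x hxA), Padic.norm_p_zpow, neg_neg]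
  refine ⟨not_lipschitz, fun n P hP hcover ↦ ?_⟩
  obtain ⟨i, hi⟩ := exists_forall_exists_lt_of_finite_cover (fun x : ℤ_[p] ↦ (x.valuation : ℤ))
    PadicInt.exists_ne_zero_lt_valuation hcover
  exact ⟨i, not_lipschitz (P i) (hP i) hi⟩
end

section
/- There exists a function g : ℤ_p → ℚ_p which is differentiable everywhere with derivative identically zero (in particular C¹), but which is not Lipschitz continuous on any neighborhood of 0 for any constant C. -/
/-!
`spikes π` equals `(π ^ (n + 1)) ^ 2` on the closed ball of radius `‖π‖ ^ (3n + 3)` around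
`π ^ (n + 1)` and `0` elsewhere. Since `‖spikes π x‖ ≤ ‖x‖ ^ 2`, its derivative at `0` is `0`;
away from `0` it is locally constant, because ultrametric balls are open and the spike balls
only accumulate at `0`. Yet `π ^ (n + 1)` and the point `π ^ (n + 1) + π ^ (3n + 2)`, just
outside its ball, have values differing by `‖π‖ ^ (2n + 2)` while lying `‖π‖ ^ (3n + 2)` apart,
so the difference quotients near `0` are unbounded.
-/

open Filter Metric Topology

section Spikes

variable {𝕜 : Type*} [NontriviallyNormedField 𝕜]

def spikeBall (π : 𝕜) (n : ℕ) : Set 𝕜 := closedBall (π ^ (n + 1)) (‖π ^ (n + 1)‖ ^ 3)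

open Classical in
noncomputable def spikes (π : 𝕜) (x : 𝕜) : 𝕜 :=
  if h : ∃ n, x ∈ spikeBall π n then (π ^ (h.choose + 1)) ^ 2 else 0

lemma spikes_of_forall_notMem {π x : 𝕜} (hx : ∀ n, x ∉ spikeBall π n) : spikes π x = 0 := by
  rw [spikes, dif_neg (not_exists.mpr hx)]

variable [IsUltrametricDist 𝕜]

lemma norm_eq_of_norm_sub_lt {x c : 𝕜} (h : ‖x - c‖ < ‖c‖) : ‖x‖ = ‖c‖ := by
  simpa [max_eq_right h.le] using
    IsUltrametricDist.norm_add_eq_max_of_norm_ne_norm h.ne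

lemma norm_eq_of_mem_spikeBall {π x : 𝕜} {n : ℕ} (hπ0 : 0 < ‖π‖) (hπ1 : ‖π‖ < 1)
    (hx : x ∈ spikeBall π n) : ‖x‖ = ‖π‖ ^ (n + 1) := by
  rw [← norm_pow]
  refine norm_eq_of_norm_sub_lt ((mem_closedBall_iff_norm.mp hx).trans_lt ?_)
  rw [norm_pow]
  exact pow_lt_self_of_lt_one₀ (by positivity) (pow_lt_one₀ hπ0.le hπ1 (by omega)) (by norm_num)

lemma eq_of_mem_spikeBall {π x : 𝕜} {m n : ℕ} (hπ0 : 0 < ‖π‖) (hπ1 : ‖π‖ < 1)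
    (hm : x ∈ spikeBall π m) (hn : x ∈ spikeBall π n) : m = n := by
  have := (norm_eq_of_mem_spikeBall hπ0 hπ1 hm).symm.trans (norm_eq_of_mem_spikeBall hπ0 hπ1 hn)
  simpa using (pow_right_strictAnti₀ hπ0 hπ1).injective this

lemma spikes_of_mem {π x : 𝕜} {n : ℕ} (hπ0 : 0 < ‖π‖) (hπ1 : ‖π‖ < 1)
    (hx : x ∈ spikeBall π n) : spikes π x = (π ^ (n + 1)) ^ 2 := by
  have h : ∃ n, x ∈ spikeBall π n := ⟨n, hx⟩
  rw [spikes, dif_pos h, eq_of_mem_spikeBall hπ0 hπ1 h.choose_spec hx]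

lemma norm_spikes_le {π : 𝕜} (hπ0 : 0 < ‖π‖) (hπ1 : ‖π‖ < 1) (x : 𝕜) :
    ‖spikes π x‖ ≤ ‖x‖ ^ 2 := by
  by_cases h : ∃ n, x ∈ spikeBall π n
  · obtain ⟨n, hn⟩ := h
    rw [spikes_of_mem hπ0 hπ1 hn, norm_pow, norm_pow, norm_eq_of_mem_spikeBall hπ0 hπ1 hn]
  · rw [spikes_of_forall_notMem (not_exists.mp h), norm_zero]
    positivity

lemma mem_spikeBall_iff_of_norm_sub_lt {π x a : 𝕜} {n : ℕ} (hπ0 : 0 < ‖π‖) (hπ1 : ‖π‖ < 1)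
    (hxa : ‖x - a‖ < min ‖a‖ (‖a‖ ^ 3)) : x ∈ spikeBall π n ↔ a ∈ spikeBall π n := by
  have hnorm : ‖x‖ = ‖a‖ := norm_eq_of_norm_sub_lt (hxa.trans_le (min_le_left _ _))
  suffices key : ∀ y z : 𝕜, ‖y - z‖ < ‖z‖ ^ 3 → z ∈ spikeBall π n → y ∈ spikeBall π n by
    refine ⟨key a x ?_, key x a (hxa.trans_le (min_le_right _ _))⟩
    rw [norm_sub_rev, hnorm]; exact hxa.trans_le (min_le_right _ _)
  intro y z hyz hz
  have hzn : ‖z‖ = ‖π ^ (n + 1)‖ := by rw [norm_pow]; exact norm_eq_of_mem_spikeBall hπ0 hπ1 hz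
  rw [spikeBall, IsUltrametricDist.closedBall_eq_of_mem hz, mem_closedBall_iff_norm, ← hzn]
  exact hyz.le

lemma spikes_eventuallyEq {π a : 𝕜} (hπ0 : 0 < ‖π‖) (hπ1 : ‖π‖ < 1) (ha : a ≠ 0) :
    spikes π =ᶠ[𝓝 a] fun _ ↦ spikes π a := by
  have hr : 0 < min ‖a‖ (‖a‖ ^ 3) := by have := norm_pos_iff.mpr ha; positivity
  filter_upwards [ball_mem_nhds a hr] with x hx
  rw [mem_ball, dist_eq_norm] at hx
  have hiff n := mem_spikeBall_iff_of_norm_sub_lt (n := n) hπ0 hπ1 hx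
  by_cases h : ∃ n, a ∈ spikeBall π n
  · obtain ⟨n, hn⟩ := h
    rw [spikes_of_mem hπ0 hπ1 hn, spikes_of_mem hπ0 hπ1 ((hiff n).mpr hn)]
  · simp only [not_exists] at h
    rw [spikes_of_forall_notMem h, spikes_of_forall_notMem fun n ↦ by rw [hiff]; exact h n]

lemma hasDerivAt_spikes {π : 𝕜} (hπ0 : 0 < ‖π‖) (hπ1 : ‖π‖ < 1) (a : 𝕜) :
    HasDerivAt (spikes π) 0 a := by
  rcases eq_or_ne a 0 with rfl | ha
  · have hO : spikes π =O[𝓝 0] fun x ↦ ‖x - 0‖ ^ 2 :=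
      Asymptotics.IsBigO.of_bound 1 (Eventually.of_forall fun x ↦ by
        simpa using norm_spikes_le hπ0 hπ1 x)
    simpa using (hO.hasFDerivAt one_lt_two).hasDerivAt
  · exact (hasDerivAt_const a (spikes π a)).congr_of_eventuallyEq (spikes_eventuallyEq hπ0 hπ1 ha)

lemma exists_mul_norm_sub_lt_norm_spikes_sub {π : 𝕜} (hπ0 : 0 < ‖π‖) (hπ1 : ‖π‖ < 1)
    (C ε : ℝ) (hε : 0 < ε) :
    ∃ x y : 𝕜, ‖x‖ < ε ∧ ‖y‖ < ε ∧ C * ‖x - y‖ < ‖spikes π x - spikes π y‖ := by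
  have hpow := tendsto_pow_atTop_nhds_zero_of_lt_one hπ0.le hπ1
  obtain ⟨n, hCn, hεn⟩ := (((hpow.const_mul C).eventually (gt_mem_nhds (by simp : C * 0 < 1))).and
    (hpow.eventually (gt_mem_nhds hε))).exists
  have hsmall : ‖π‖ ^ (n + 1) < ε := (pow_le_pow_of_le_one hπ0.le hπ1.le n.le_succ).trans_lt hεn
  set x := π ^ (n + 1)
  set y := x + π ^ (3 * n + 2)
  have hxy : ‖x - y‖ = ‖π‖ ^ (3 * n + 2) := by simp [x, y, norm_pow]
  have hy : ‖y‖ = ‖π‖ ^ (n + 1) := by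
    rw [norm_eq_of_norm_sub_lt, norm_pow]
    simpa [y, x, norm_pow] using pow_lt_pow_right_of_lt_one₀ hπ0 hπ1 (by omega)
  have hgx : spikes π x = x ^ 2 := spikes_of_mem hπ0 hπ1 (mem_closedBall_self (by positivity))
  have hgy : spikes π y = 0 := by
    refine spikes_of_forall_notMem fun m hm ↦ ?_
    have hmn : m + 1 = n + 1 := (pow_right_strictAnti₀ hπ0 hπ1).injective
      ((norm_eq_of_mem_spikeBall hπ0 hπ1 hm).symm.trans hy)
    rw [Nat.succ_inj.mp hmn, spikeBall, mem_closedBall_iff_norm, norm_sub_rev] at hm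
    change ‖x - y‖ ≤ ‖x‖ ^ 3 at hm
    rw [hxy, norm_pow, ← pow_mul] at hm
    exact (pow_lt_pow_right_of_lt_one₀ hπ0 hπ1 (by omega)).not_ge hm
  refine ⟨x, y, by rwa [norm_pow], by rwa [hy], ?_⟩
  calc C * ‖x - y‖ = C * ‖π‖ ^ n * ‖π‖ ^ (2 * n + 2) := by rw [hxy]; ring
    _ < 1 * ‖π‖ ^ (2 * n + 2) := by gcongr
    _ = ‖spikes π x - spikes π y‖ := by rw [hgx, hgy, sub_zero, norm_pow, norm_pow]; ring

end Spikes

/-- There is a function `g : ℤ_p → ℚ_p` (here `ℤ_p` viewed as the closed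
unit ball of `ℚ_p`) which is differentiable everywhere with derivative identically zero,
but which is not Lipschitz continuous on any neighborhood of `0` for any constant. -/
theorem stmt4 (p : ℕ) [Fact p.Prime] :
    ∃ g : ℚ_[p] → ℚ_[p],
      (∀ a ∈ {x : ℚ_[p] | ‖x‖ ≤ 1}, HasDerivWithinAt g 0 {x : ℚ_[p] | ‖x‖ ≤ 1} a) ∧
      (∀ C : ℝ, ∀ ε : ℝ, 0 < ε →
        ∃ x ∈ {x : ℚ_[p] | ‖x‖ ≤ 1}, ∃ y ∈ {x : ℚ_[p] | ‖x‖ ≤ 1},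
          ‖x‖ < ε ∧ ‖y‖ < ε ∧ C * ‖x - y‖ < ‖g x - g y‖) := by
  obtain ⟨π, hπ0, hπ1⟩ := NormedField.exists_norm_lt_one ℚ_[p]
  refine ⟨spikes π, fun a _ ↦ (hasDerivAt_spikes hπ0 hπ1 a).hasDerivWithinAt, fun C ε hε ↦ ?_⟩
  obtain ⟨x, y, hx, hy, hC⟩ :=
    exists_mul_norm_sub_lt_norm_spikes_sub hπ0 hπ1 C (min ε 1) (lt_min hε one_pos)
  exact ⟨x, (hx.trans_le (min_le_right _ _)).le, y, (hy.trans_le (min_le_right _ _)).le,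
    hx.trans_le (min_le_left _ _), hy.trans_le (min_le_left _ _), hC⟩
end

section
/- For λ ∈ ℚ_p^× and integers m, n > 0, the set λ·Q_{m,n} is the disjoint union over a ∈ ℤ of the balls λ·p^{na}·(1 + p^mℤ_p); these balls are pairwise disjoint and each is a maximal ball contained in λ·Q_{m,n} (no strictly larger ball is contained in λ·Q_{m,n}). -/
/-- `ac_m(w) = ac_m(t)`: the angular components mod `p^m` agree. -/
def acEq (p : ℕ) [Fact p.Prime] (k : ℕ) (w t : ℚ_[p]) : Prop :=
  ‖w * (p : ℚ_[p]) ^ (-w.valuation) - t * (p : ℚ_[p]) ^ (-t.valuation)‖ ≤ (p : ℝ) ^ (-(k : ℤ))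

/-- A ball in `ℚ_p` is a set of the form `a + b·ℤ_p` with `b ≠ 0`. -/
def IsBall (p : ℕ) [Fact p.Prime] (B : Set ℚ_[p]) : Prop :=
  ∃ a b : ℚ_[p], b ≠ 0 ∧ B = {x | ‖x - a‖ ≤ ‖b‖}

/-- The set `Q_{m,n} = {x ∈ ℚ_p^× : n ∣ v(x), ac_m(x) = 1}`. -/
def Qset (p : ℕ) [Fact p.Prime] (m n : ℕ) : Set ℚ_[p] :=
  {x | x ≠ 0 ∧ (n : ℤ) ∣ x.valuation ∧ acEq p m x 1}

/-- The ball `λ·p^{na}·(1 + p^mℤ_p)`. -/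
def cosetBall (p : ℕ) [Fact p.Prime] (m n : ℕ) (l : ℚ_[p]) (a : ℤ) : Set ℚ_[p] :=
  Set.range fun u : ℤ_[p] => l * (p : ℚ_[p]) ^ ((n : ℤ) * a) * (1 + (p : ℚ_[p]) ^ m * (u : ℚ_[p]))

/-! The ball `λ·p^{na}·(1 + p^mℤ_p)` is the closed ball around `c = λ·p^{na}` of radius
`‖c‖·p^{-m}`, and `x ≠ 0` has `ac_m(x) = 1` exactly when it lies in the ball of that radius
around `p^{v(x)}`; this gives the decomposition, and the balls are disjoint because their
elements have different norms. A strictly larger ball around `c` has radius at least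
`‖c‖·p^{1-m}`, so it contains `c·(1 - p^{m-1})`, which is `0` when `m = 1` and otherwise has
angular component `1 - p^{m-1} ≢ 1 mod p^m`. -/

open Metric

variable {p : ℕ} [Fact p.Prime]

lemma Padic.natCast_p_ne_zero : (p : ℚ_[p]) ≠ 0 :=
  Nat.cast_ne_zero.mpr (Fact.out : p.Prime).ne_zero

lemma Padic.valuation_p_zpow (k : ℤ) : ((p : ℚ_[p]) ^ k).valuation = k := by
  simp [Padic.valuation_zpow]

lemma Padic.valuation_eq_of_norm_eq {x : ℚ_[p]} {k : ℤ} (h : ‖x‖ = ‖(p : ℚ_[p]) ^ k‖) :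
    x.valuation = k := by
  have hp : (1 : ℝ) < p := mod_cast (Fact.out : p.Prime).one_lt
  have hx : x ≠ 0 := by
    rintro rfl
    rw [norm_zero, Padic.norm_p_zpow] at h
    exact (zpow_pos (by positivity) _).ne h
  rw [Padic.norm_eq_zpow_neg_valuation hx, Padic.norm_p_zpow] at h
  simpa using zpow_right_injective₀ (by positivity) hp.ne' h

lemma Padic.norm_le_of_norm_mul_p_lt {x y : ℚ_[p]} (h : ‖x * p‖ < ‖y‖) : ‖x‖ ≤ ‖y‖ := by
  rcases eq_or_ne x 0 with rfl | hx
  · simp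
  have hp : (p : ℝ) ≠ 0 := by simpa using (Fact.out : p.Prime).ne_zero
  rw [norm_mul, Padic.norm_p, Padic.norm_eq_zpow_neg_valuation hx, ← zpow_neg_one,
    ← zpow_add₀ hp] at h
  rw [Padic.norm_eq_zpow_neg_valuation hx]
  have := (Padic.norm_lt_pow_iff_norm_le_pow_sub_one y (-x.valuation)).not.mpr h.not_ge
  exact le_of_not_gt this

lemma Padic.norm_one_add_p_pow_mul {m : ℕ} (hm : 0 < m) (u : ℤ_[p]) :
    ‖1 + (p : ℚ_[p]) ^ m * u‖ = 1 := by
  have hsmall : ‖(p : ℚ_[p]) ^ m * u‖ < ‖(1 : ℚ_[p])‖ := by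
    rw [norm_mul, norm_pow, Padic.norm_p, norm_one]
    calc ((p : ℝ)⁻¹) ^ m * ‖(u : ℚ_[p])‖ ≤ ((p : ℝ)⁻¹) ^ m :=
          mul_le_of_le_one_right (by positivity) u.norm_le_one
      _ < 1 := pow_lt_one₀ (by positivity)
          (inv_lt_one_of_one_lt₀ (mod_cast (Fact.out : p.Prime).one_lt)) hm.ne'
  simpa using Padic.norm_eq_of_norm_sub_lt_right
    (z1 := 1 + (p : ℚ_[p]) ^ m * (u : ℚ_[p])) (z2 := 1) (by rwa [add_sub_cancel_left])

lemma PadicInt.range_add_mul_eq_closedBall (c : ℚ_[p]) {d : ℚ_[p]} (hd : d ≠ 0) :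
    Set.range (fun u : ℤ_[p] => c + d * (u : ℚ_[p])) = closedBall c ‖d‖ := by
  ext x
  simp only [Set.mem_range, mem_closedBall, dist_eq_norm]
  constructor
  · rintro ⟨u, rfl⟩
    simpa using mul_le_of_le_one_right (norm_nonneg d) u.norm_le_one
  · intro hx
    have hu : ‖(x - c) / d‖ ≤ 1 := by
      rwa [norm_div, div_le_one (norm_pos_iff.mpr hd)]
    exact ⟨⟨(x - c) / d, hu⟩, by simp [mul_div_cancel₀ _ hd]⟩

lemma acEq_one_iff {m : ℕ} {x : ℚ_[p]} :
    acEq p m x 1 ↔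
      x ∈ closedBall ((p : ℚ_[p]) ^ x.valuation) ‖(p : ℚ_[p]) ^ x.valuation * p ^ m‖ := by
  have hpow : (p : ℚ_[p]) ^ x.valuation ≠ 0 := zpow_ne_zero _ Padic.natCast_p_ne_zero
  have hsub : x - (p : ℚ_[p]) ^ x.valuation =
      (p : ℚ_[p]) ^ x.valuation * (x * (p : ℚ_[p]) ^ (-x.valuation) - 1) := by
    rw [zpow_neg]; field_simp
  rw [acEq, mem_closedBall, dist_eq_norm, hsub, norm_mul, norm_mul, Padic.norm_p_pow,
    mul_le_mul_iff_right₀ (norm_pos_iff.mpr hpow)]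
  simp [Padic.valuation_one]

lemma cosetBall_eq_closedBall {m n : ℕ} {l : ℚ_[p]} (hl : l ≠ 0) (a : ℤ) :
    cosetBall p m n l a =
      closedBall (l * (p : ℚ_[p]) ^ ((n : ℤ) * a)) ‖l * (p : ℚ_[p]) ^ ((n : ℤ) * a) * p ^ m‖ := by
  have hp := Padic.natCast_p_ne_zero (p := p)
  rw [← PadicInt.range_add_mul_eq_closedBall _
    (mul_ne_zero (mul_ne_zero hl (zpow_ne_zero _ hp)) (pow_ne_zero _ hp))]
  unfold cosetBall
  congr 1
  funext u
  ring

lemma image_mul_cosetBall_one {m n : ℕ} (l : ℚ_[p]) (a : ℤ) :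
    (fun x => l * x) '' cosetBall p m n 1 a = cosetBall p m n l a := by
  rw [cosetBall, ← Set.range_comp]
  unfold cosetBall
  congr 1
  funext u
  simp [mul_assoc]

lemma norm_of_mem_cosetBall {m n : ℕ} (hm : 0 < m) {l x : ℚ_[p]} {a : ℤ}
    (hx : x ∈ cosetBall p m n l a) : ‖x‖ = ‖l * (p : ℚ_[p]) ^ ((n : ℤ) * a)‖ := by
  obtain ⟨u, rfl⟩ := hx
  rw [norm_mul _ (1 + _), Padic.norm_one_add_p_pow_mul hm, mul_one]

lemma Qset_eq_iUnion_cosetBall {m n : ℕ} (hm : 0 < m) :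
    Qset p m n = ⋃ a : ℤ, cosetBall p m n 1 a := by
  ext x
  simp only [Set.mem_iUnion]
  constructor
  · rintro ⟨-, ⟨a, ha⟩, hac⟩
    refine ⟨a, ?_⟩
    rw [cosetBall_eq_closedBall one_ne_zero, one_mul, ← ha]
    exact acEq_one_iff.mp hac
  · rintro ⟨a, hx⟩
    have hnorm := norm_of_mem_cosetBall hm hx
    rw [one_mul] at hnorm
    have hval := Padic.valuation_eq_of_norm_eq hnorm
    refine ⟨norm_ne_zero_iff.mp ?_, ⟨a, hval⟩, ?_⟩
    · exact hnorm ▸ norm_ne_zero_iff.mpr (zpow_ne_zero _ Padic.natCast_p_ne_zero)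
    · rw [acEq_one_iff, hval, ← one_mul ((p : ℚ_[p]) ^ _), ← cosetBall_eq_closedBall one_ne_zero]
      exact hx

lemma disjoint_cosetBall {m n : ℕ} (hm : 0 < m) (hn : 0 < n) {l : ℚ_[p]} (hl : l ≠ 0)
    {a b : ℤ} (hab : a ≠ b) : Disjoint (cosetBall p m n l a) (cosetBall p m n l b) := by
  refine Set.disjoint_left.mpr fun x hxa hxb => hab ?_
  have h := (norm_of_mem_cosetBall hm hxa).symm.trans (norm_of_mem_cosetBall hm hxb)
  rw [norm_mul, norm_mul, mul_right_inj' (norm_ne_zero_iff.mpr hl)] at h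
  have hval := Padic.valuation_eq_of_norm_eq h
  rw [Padic.valuation_p_zpow] at hval
  exact mul_left_cancel₀ (by exact_mod_cast hn.ne') hval

lemma p_zpow_mul_one_sub_p_pow_pred_not_mem_Qset {m n : ℕ} (hm : 0 < m) (k : ℤ) :
    (p : ℚ_[p]) ^ k * (1 - p ^ (m - 1)) ∉ Qset p m n := by
  rintro ⟨hx0, -, hac⟩
  obtain ⟨j, rfl⟩ : ∃ j, m = j + 1 := ⟨m - 1, by omega⟩
  rw [Nat.add_sub_cancel] at hx0 hac
  rcases j.eq_zero_or_pos with rfl | hj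
  · simp at hx0
  have hunit : ‖(1 : ℚ_[p]) - p ^ j‖ = 1 := by
    have := Padic.norm_one_add_p_pow_mul hj (-1 : ℤ_[p])
    rwa [PadicInt.coe_neg, PadicInt.coe_one, mul_neg_one, ← sub_eq_add_neg] at this
  have hval : ((p : ℚ_[p]) ^ k * (1 - p ^ j)).valuation = k :=
    Padic.valuation_eq_of_norm_eq (by rw [norm_mul, hunit, mul_one])
  have hdiff : (p : ℚ_[p]) ^ k * (1 - p ^ j) - p ^ k = -((p : ℚ_[p]) ^ k * p ^ j) := by ring
  have hp : (1 : ℝ) < p := mod_cast (Fact.out : p.Prime).one_lt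
  rw [acEq_one_iff, hval, mem_closedBall, dist_eq_norm, hdiff, norm_neg, norm_mul, norm_mul,
    mul_le_mul_iff_right₀ (norm_pos_iff.mpr (zpow_ne_zero _ Padic.natCast_p_ne_zero)),
    Padic.norm_p_pow, Padic.norm_p_pow, zpow_le_zpow_iff_right₀ hp] at hac
  omega

lemma not_subset_of_cosetBall_ssubset {m n : ℕ} (hm : 0 < m) {l : ℚ_[p]} (hl : l ≠ 0) {a : ℤ}
    {B : Set ℚ_[p]} (hB : IsBall p B) (hsub : cosetBall p m n l a ⊂ B) :
    ¬ B ⊆ (fun x => l * x) '' Qset p m n := by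
  obtain ⟨c', d, -, rfl⟩ := hB
  set c := l * (p : ℚ_[p]) ^ ((n : ℤ) * a)
  rw [cosetBall_eq_closedBall hl] at hsub
  have hball : {x | ‖x - c'‖ ≤ ‖d‖} = closedBall c ‖d‖ := by
    have hc : c ∈ closedBall c' ‖d‖ := by
      simpa [dist_eq_norm] using hsub.subset (mem_closedBall_self (norm_nonneg _))
    rw [← IsUltrametricDist.closedBall_eq_of_mem hc]
    ext
    simp [dist_eq_norm]
  rw [hball] at hsub ⊢
  have hlt : ‖c * p ^ m‖ < ‖d‖ := by
    by_contra! h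
    exact hsub.not_subset (closedBall_subset_closedBall h)
  have hle : ‖c * p ^ (m - 1)‖ ≤ ‖d‖ :=
    Padic.norm_le_of_norm_mul_p_lt (by rwa [mul_assoc, ← pow_succ, Nat.sub_add_cancel hm])
  intro hB
  have hz : c * (1 - p ^ (m - 1)) ∈ closedBall c ‖d‖ := by
    rwa [mem_closedBall, dist_eq_norm, show c * (1 - p ^ (m - 1)) - c = -(c * p ^ (m - 1)) by ring,
      norm_neg]
  obtain ⟨y, hy, hyz⟩ := hB hz
  have hy_eq : y = (p : ℚ_[p]) ^ ((n : ℤ) * a) * (1 - p ^ (m - 1)) :=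
    mul_left_cancel₀ hl (hyz.trans (mul_assoc _ _ _))
  exact p_zpow_mul_one_sub_p_pow_pred_not_mem_Qset hm _ (hy_eq ▸ hy)

/-- For `λ ∈ ℚ_p^×` and `m, n > 0`, `λ·Q_{m,n}` is the disjoint union over
`a ∈ ℤ` of the balls `λ·p^{na}·(1 + p^mℤ_p)`, and each such ball is a maximal ball
contained in `λ·Q_{m,n}`. -/
theorem stmt7 (p : ℕ) [Fact p.Prime] (m n : ℕ) (hm : 0 < m) (hn : 0 < n)
    (l : ℚ_[p]) (hl : l ≠ 0) :
    ((fun x => l * x) '' Qset p m n = ⋃ a : ℤ, cosetBall p m n l a) ∧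
    (∀ a b : ℤ, a ≠ b → Disjoint (cosetBall p m n l a) (cosetBall p m n l b)) ∧
    (∀ a : ℤ, cosetBall p m n l a ⊆ (fun x => l * x) '' Qset p m n ∧
      ∀ B' : Set ℚ_[p], IsBall p B' → cosetBall p m n l a ⊂ B' →
        ¬ B' ⊆ (fun x => l * x) '' Qset p m n) := by
  have hunion : (fun x => l * x) '' Qset p m n = ⋃ a : ℤ, cosetBall p m n l a := by
    simp only [Qset_eq_iUnion_cosetBall hm, Set.image_iUnion, image_mul_cosetBall_one]
  refine ⟨hunion, fun a b => disjoint_cosetBall hm hn hl, fun a => ⟨?_, ?_⟩⟩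
  · exact hunion ▸ Set.subset_iUnion _ a
  · exact fun B hB hsub => not_subset_of_cosetBall_ssubset hm hl hB hsub
end

section
/- Let B₁ = a + p^r ℤ_p be a ball in ℚ_p, κ ∈ ℤ, and F : B₁ → ℚ_p a function satisfying v(F(x) - F(y)) = κ + v(x - y) for all x ≠ y in B₁. Then F is injective and F(B₁) is exactly the ball F(a) + p^{r+κ}ℤ_p. -/
/-!
Once `F` is injective, the valuation identity says `‖F x - F y‖ = ‖p ^ κ‖ * ‖x - y‖`, so
`x ↦ a + p ^ (-κ) * (F x - F a)` is an isometry of the compact ball `B₁` into itself. An isometry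
of a compact metric space into itself is onto: the orbit of any point returns arbitrarily close
to it, so the point lies in the closure of the (compact) image.
Injectivity comes from the ultrametric inequality: if `F x = F y` with `x ≠ y`, the point
`z = x + p (x - y)` satisfies `v(z - x) = v(z - y)`, yet `z` is strictly closer to `x` than to `y`.
-/
open Metric Set

theorem IsCompact.surjOn_of_dist_eq {X : Type*} [MetricSpace X] {s : Set X} (hs : IsCompact s)
    {f : X → X} (hmaps : MapsTo f s s) (hf : ∀ x ∈ s, ∀ y ∈ s, dist (f x) (f y) = dist x y) :
    SurjOn f s s := by
  have hiter : ∀ n, ∀ x ∈ s, ∀ y ∈ s, dist (f^[n] x) (f^[n] y) = dist x y := by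
    intro n
    induction n with
    | zero => simp
    | succ n ih =>
      intro x hx y hy
      rw [Function.iterate_succ_apply, Function.iterate_succ_apply, ih _ (hmaps hx) _ (hmaps hy),
        hf x hx y hy]
  have himage : IsClosed (f '' s) :=
    (hs.image_of_continuousOn (LipschitzOnWith.of_dist_le_mul (K := 1) fun x hx y hy => by
      simp [hf x hx y hy]).continuousOn).isClosed
  intro y hy
  rw [← himage.closure_eq, Metric.mem_closure_iff]
  intro ε hε
  obtain ⟨_, -, φ, hφ, hlim⟩ :=
    hs.tendsto_subseq (x := fun n => f^[n] y) fun n => hmaps.iterate n hy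
  obtain ⟨N, hN⟩ := Metric.cauchySeq_iff'.mp hlim.cauchySeq ε hε
  -- the orbit of `y` comes back within `ε` of `y`, and every later orbit point lies in `f '' s`
  obtain ⟨k, hk⟩ : ∃ k, φ (N + 1) = φ N + (k + 1) :=
    Nat.exists_eq_add_of_lt (hφ N.lt_succ_self)
  refine ⟨f (f^[k] y), mem_image_of_mem f (hmaps.iterate k hy), ?_⟩
  have hclose : dist (f^[φ (N + 1)] y) (f^[φ N] y) < ε := hN (N + 1) N.le_succ
  rwa [hk, Function.iterate_add_apply, Function.iterate_succ_apply', dist_comm,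
    hiter _ _ hy _ (hmaps (hmaps.iterate k hy))] at hclose

theorem image_closedBall_of_norm_sub_eq_mul {𝕜 E : Type*} [NormedField 𝕜] [NormedAddCommGroup E]
    [NormedSpace 𝕜 E] [ProperSpace E] {F : E → E} {a : E} {R : ℝ} {c : 𝕜} (hc : c ≠ 0)
    (hF : ∀ x ∈ closedBall a R, ∀ y ∈ closedBall a R, ‖F x - F y‖ = ‖c‖ * ‖x - y‖) :
    F '' closedBall a R = closedBall (F a) (‖c‖ * R) := by
  have hc' : 0 < ‖c‖ := norm_pos_iff.mpr hc
  refine (image_subset_iff.mpr fun x hx => ?_).antisymm fun w hw => ?_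
  · have ha : a ∈ closedBall a R := mem_closedBall_self (dist_nonneg.trans hx)
    rw [mem_preimage, mem_closedBall_iff_norm, hF x hx a ha]
    exact mul_le_mul_of_nonneg_left (mem_closedBall_iff_norm.mp hx) hc'.le
  set G : E → E := fun x => a + c⁻¹ • (F x - F a)
  have hG : ∀ x ∈ closedBall a R, ∀ y ∈ closedBall a R, dist (G x) (G y) = dist x y := by
    intro x hx y hy
    rw [dist_eq_norm, dist_eq_norm, add_sub_add_left_eq_sub, ← smul_sub, sub_sub_sub_cancel_right,
      norm_smul, norm_inv, hF x hx y hy, inv_mul_cancel_left₀ hc'.ne']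
  have hmaps : MapsTo G (closedBall a R) (closedBall a R) := by
    intro x hx
    have ha : a ∈ closedBall a R := mem_closedBall_self (dist_nonneg.trans hx)
    rw [mem_closedBall, ← hG x hx a ha] at hx
    simpa [G] using hx
  have hw' : a + c⁻¹ • (w - F a) ∈ closedBall a R := by
    rw [mem_closedBall_iff_norm, add_sub_cancel_left, norm_smul, norm_inv, inv_mul_le_iff₀ hc']
    exact mem_closedBall_iff_norm.mp hw
  obtain ⟨x, hx, hGx⟩ := (isCompact_closedBall a R).surjOn_of_dist_eq hmaps hG hw'
  refine ⟨x, hx, ?_⟩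
  simpa [G, hc] using hGx

namespace Padic

variable {p : ℕ} [Fact p.Prime] {F : ℚ_[p] → ℚ_[p]} {a : ℚ_[p]} {R : ℝ} {κ : ℤ}

theorem injOn_of_valuation_sub_eq
    (hF : ∀ x ∈ closedBall a R, ∀ y ∈ closedBall a R, x ≠ y →
      (F x - F y).valuation = κ + (x - y).valuation) :
    InjOn F (closedBall a R) := by
  intro x hx y hy hxy
  by_contra hne
  have hxy_pos : 0 < dist x y := dist_pos.mpr hne
  set z := x + p * (x - y)
  have hzx : dist z x = ‖(p : ℚ_[p])‖ * dist x y := by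
    simp only [z, dist_eq_norm, add_sub_cancel_left, norm_mul]
  have hzx_lt : dist z x < dist x y := by
    rw [hzx]
    exact mul_lt_of_lt_one_left hxy_pos norm_p_lt_one
  have hzy : dist z y = dist x y := by
    rw [IsUltrametricDist.dist_eq_max_of_dist_ne_dist z x y hzx_lt.ne, max_eq_right hzx_lt.le]
  have hz : z ∈ closedBall a R := by
    rw [IsUltrametricDist.closedBall_eq_of_mem hx] at hy ⊢
    exact mem_closedBall.mpr (hzx_lt.le.trans (mem_closedBall'.mp hy))
  have hp : (p : ℚ_[p]) ≠ 0 := by exact_mod_cast (Fact.out : p.Prime).ne_zero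
  have hzx_ne : z ≠ x := dist_pos.mp (by rw [hzx]; exact mul_pos (norm_pos_iff.mpr hp) hxy_pos)
  have hzy_ne : z ≠ y := dist_pos.mp (hzy ▸ hxy_pos)
  have hval : (z - x).valuation = (z - y).valuation := by
    have h₁ := hF z hz x hx hzx_ne
    have h₂ := hF z hz y hy hzy_ne
    rw [hxy] at h₁
    omega
  have hnorm : dist z x = dist z y := by
    rw [dist_eq_norm, dist_eq_norm, norm_eq_zpow_neg_valuation (sub_ne_zero.mpr hzx_ne),
      norm_eq_zpow_neg_valuation (sub_ne_zero.mpr hzy_ne), hval]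
  exact hzx_lt.ne (hnorm.trans hzy)

theorem norm_sub_eq_of_valuation_sub_eq
    (hF : ∀ x ∈ closedBall a R, ∀ y ∈ closedBall a R, x ≠ y →
      (F x - F y).valuation = κ + (x - y).valuation) :
    ∀ x ∈ closedBall a R, ∀ y ∈ closedBall a R, ‖F x - F y‖ = ‖(p : ℚ_[p]) ^ κ‖ * ‖x - y‖ := by
  intro x hx y hy
  obtain rfl | hne := eq_or_ne x y
  · simp
  have hFne : F x - F y ≠ 0 := sub_ne_zero.mpr fun h => hne (injOn_of_valuation_sub_eq hF hx hy h)
  have hp : (p : ℝ) ≠ 0 := by exact_mod_cast (Fact.out : p.Prime).ne_zero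
  rw [norm_eq_zpow_neg_valuation hFne, hF x hx y hy hne,
    norm_eq_zpow_neg_valuation (sub_ne_zero.mpr hne), norm_p_zpow, neg_add, zpow_add₀ hp]

end Padic

/-- If `F` on the ball `B₁ = a + p^rℤ_p` satisfies
`v(F x - F y) = κ + v(x - y)` for all `x ≠ y` in `B₁`, then `F` is injective on `B₁` and
`F(B₁)` is exactly the ball `F(a) + p^{r+κ}ℤ_p`. -/
theorem stmt10 (p : ℕ) [Fact p.Prime] (a : ℚ_[p]) (r κ : ℤ) (F : ℚ_[p] → ℚ_[p])
    (h : ∀ x ∈ {x : ℚ_[p] | ‖x - a‖ ≤ (p : ℝ) ^ (-r)},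
         ∀ y ∈ {x : ℚ_[p] | ‖x - a‖ ≤ (p : ℝ) ^ (-r)}, x ≠ y →
      (F x - F y).valuation = κ + (x - y).valuation) :
    Set.InjOn F {x : ℚ_[p] | ‖x - a‖ ≤ (p : ℝ) ^ (-r)} ∧
    F '' {x : ℚ_[p] | ‖x - a‖ ≤ (p : ℝ) ^ (-r)} =
      {z : ℚ_[p] | ‖z - F a‖ ≤ (p : ℝ) ^ (-(r + κ))} := by
  have hball : ∀ (b : ℚ_[p]) (s : ℝ), {x | ‖x - b‖ ≤ s} = closedBall b s := fun b s => by
    ext; exact mem_closedBall_iff_norm.symm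
  simp only [hball] at h ⊢
  have hp : (p : ℚ_[p]) ≠ 0 := by exact_mod_cast (Fact.out : p.Prime).ne_zero
  refine ⟨Padic.injOn_of_valuation_sub_eq h, ?_⟩
  rw [image_closedBall_of_norm_sub_eq_mul (zpow_ne_zero κ hp)
    (Padic.norm_sub_eq_of_valuation_sub_eq h), Padic.norm_p_zpow, ← zpow_add₀ (by simpa using hp),
    neg_add, add_comm]
end

section
/- Let ε > 0, m, m' ≥ 1 be integers and let A ⊆ ℚ_p^× be a set such that t·(1+p^mℤ_p) ⊆ A for every t ∈ A and ac_m is constant on A. Let f : A → ℚ_p^× be a function such that ac_{m'}(f(t)) is constant on A and such that for each t ∈ A there is c_t ∈ ℚ_p^× with |c_t|_p ≤ ε satisfying: (i) v(f(x) - f(y)) = v(c_t) + v(x - y) for all x ≠ y in t·(1+p^mℤ_p), and (ii) m + v(c_t) + v(t) = m' + v(f(t)). Then f is globally Lipschitz continuous on A with constant ε·max(1, p^{m'-m}), i.e. |f(x₁) - f(x₂)|_p ≤ ε·max(1, p^{m'-m})·|x₁ - x₂|_p for all x₁, x₂ ∈ A. -/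
section Ultrametric

variable {E F : Type*} [SeminormedAddCommGroup E] [IsUltrametricDist E]
  [SeminormedAddCommGroup F] [IsUltrametricDist F]

lemma IsUltrametricDist.norm_sub_le_max (x y : E) : ‖x - y‖ ≤ max ‖x‖ ‖y‖ := by
  simpa only [sub_eq_add_neg, norm_neg] using norm_add_le_max x (-y)

lemma IsUltrametricDist.norm_sub_eq_max_of_norm_ne_norm {x y : E} (h : ‖x‖ ≠ ‖y‖) :
    ‖x - y‖ = max ‖x‖ ‖y‖ := by
  simpa only [sub_zero, zero_sub, norm_neg] using
    norm_sub_eq_max_of_norm_sub_ne_norm_sub x 0 y (by simpa only [sub_zero, zero_sub, norm_neg])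

lemma IsUltrametricDist.norm_sub_le_mul_of_norm_ne_norm {x y : E} {a b : F} {L : ℝ} (hL : 0 ≤ L)
    (hxy : ‖x‖ ≠ ‖y‖) (ha : ‖a‖ ≤ L * ‖x‖) (hb : ‖b‖ ≤ L * ‖y‖) : ‖a - b‖ ≤ L * ‖x - y‖ :=
  calc ‖a - b‖ ≤ max ‖a‖ ‖b‖ := norm_sub_le_max a b
    _ ≤ L * max ‖x‖ ‖y‖ := by rw [mul_max_of_nonneg _ _ hL]; exact max_le_max ha hb
    _ = L * ‖x - y‖ := by rw [norm_sub_eq_max_of_norm_ne_norm hxy]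

end Ultrametric

namespace Padic

variable {p : ℕ} [Fact p.Prime]

lemma norm_le_of_valuation_eq {x y : ℚ_[p]} (hy : y ≠ 0) (h : x.valuation = y.valuation) :
    ‖x‖ ≤ ‖y‖ := by
  rcases eq_or_ne x 0 with rfl | hx
  · simp
  · rw [norm_eq_zpow_neg_valuation hx, norm_eq_zpow_neg_valuation hy, h]

lemma valuation_eq_iff_norm_eq {x y : ℚ_[p]} (hx : x ≠ 0) (hy : y ≠ 0) :
    x.valuation = y.valuation ↔ ‖x‖ = ‖y‖ := by
  have hp : (1 : ℝ) < p := mod_cast (Fact.out : p.Prime).one_lt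
  rw [norm_eq_zpow_neg_valuation hx, norm_eq_zpow_neg_valuation hy,
    zpow_right_inj₀ (zero_lt_one.trans hp) hp.ne', neg_inj]

lemma norm_le_zpow_mul_of_add_valuation_eq {k k' : ℤ} {a c t : ℚ_[p]} (hc : c ≠ 0) (ht : t ≠ 0)
    (h : k + c.valuation + t.valuation = k' + a.valuation) :
    ‖a‖ ≤ (p : ℝ) ^ (k' - k) * ‖c‖ * ‖t‖ := by
  have hp : (p : ℚ_[p]) ≠ 0 := mod_cast (Fact.out : p.Prime).ne_zero
  have hpk : (p : ℚ_[p]) ^ (k - k') ≠ 0 := zpow_ne_zero _ hp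
  calc ‖a‖ ≤ ‖(p : ℚ_[p]) ^ (k - k') * c * t‖ := by
        refine norm_le_of_valuation_eq (mul_ne_zero (mul_ne_zero hpk hc) ht) ?_
        rw [valuation_mul (mul_ne_zero hpk hc) ht, valuation_mul hpk hc, valuation_zpow,
          valuation_p]
        omega
    _ = (p : ℝ) ^ (k' - k) * ‖c‖ * ‖t‖ := by rw [norm_mul, norm_mul, norm_p_zpow, neg_sub]

end Padic

open Padic in
lemma acEq.norm_sub_le {p : ℕ} [Fact p.Prime] {k : ℕ} {x y : ℚ_[p]} (h : acEq p k x y)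
    (hx : x ≠ 0) (hv : x.valuation = y.valuation) :
    ‖x - y‖ ≤ (p : ℝ) ^ (-(k : ℤ)) * ‖x‖ := by
  have hp : (p : ℚ_[p]) ≠ 0 := mod_cast (Fact.out : p.Prime).ne_zero
  have hsplit : x - y = (x * (p : ℚ_[p]) ^ (-x.valuation) - y * (p : ℚ_[p]) ^ (-y.valuation)) *
      (p : ℚ_[p]) ^ x.valuation := by
    rw [← hv, ← sub_mul, mul_assoc, ← zpow_add₀ hp, neg_add_cancel, zpow_zero, mul_one]
  rw [hsplit, norm_mul, norm_p_zpow, ← norm_eq_zpow_neg_valuation hx]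
  exact mul_le_mul_of_nonneg_right h (norm_nonneg x)

theorem stmt12_general (p : ℕ) [Fact p.Prime] (ε : ℝ) (m m' : ℕ)
    (A : Set ℚ_[p])
    (hA0 : ∀ x ∈ A, x ≠ 0)
    (hAac : ∀ x ∈ A, ∀ y ∈ A, acEq p m x y)
    (f : ℚ_[p] → ℚ_[p])
    (hc : ∀ t ∈ A, ∃ c : ℚ_[p], c ≠ 0 ∧ ‖c‖ ≤ ε ∧
      (∀ x y : ℚ_[p], ‖x - t‖ ≤ (p : ℝ) ^ (-(m : ℤ)) * ‖t‖ →
        ‖y - t‖ ≤ (p : ℝ) ^ (-(m : ℤ)) * ‖t‖ → x ≠ y →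
        (f x - f y).valuation = c.valuation + (x - y).valuation) ∧
      (m : ℤ) + c.valuation + t.valuation = (m' : ℤ) + (f t).valuation) :
    ∀ x₁ ∈ A, ∀ x₂ ∈ A,
      ‖f x₁ - f x₂‖ ≤ ε * max 1 ((p : ℝ) ^ ((m' : ℤ) - (m : ℤ))) * ‖x₁ - x₂‖ := by
  intro x₁ h₁ x₂ h₂
  set K := max 1 ((p : ℝ) ^ ((m' : ℤ) - (m : ℤ)))
  obtain ⟨c, hc0, hcε, hjac, -⟩ := hc x₁ h₁
  have hε : 0 ≤ ε := (norm_nonneg c).trans hcε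
  rcases eq_or_ne x₁ x₂ with rfl | hne
  · simp
  by_cases hv : x₁.valuation = x₂.valuation
  · have hx₂ : ‖x₂ - x₁‖ ≤ (p : ℝ) ^ (-(m : ℤ)) * ‖x₁‖ :=
      norm_sub_rev x₁ x₂ ▸ (hAac x₁ h₁ x₂ h₂).norm_sub_le (hA0 x₁ h₁) hv
    have hsub : x₁ - x₂ ≠ 0 := sub_ne_zero.2 hne
    calc ‖f x₁ - f x₂‖ ≤ ‖c * (x₁ - x₂)‖ := by
          refine Padic.norm_le_of_valuation_eq (mul_ne_zero hc0 hsub) ?_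
          rw [Padic.valuation_mul hc0 hsub]
          exact hjac x₁ x₂ (by rw [sub_self, norm_zero]; positivity) hx₂ hne
      _ ≤ ε * K * ‖x₁ - x₂‖ := by
          rw [norm_mul]
          gcongr
          exact hcε.trans (le_mul_of_one_le_right hε (le_max_left _ _))
  · have hf : ∀ t ∈ A, ‖f t‖ ≤ ε * K * ‖t‖ := by
      intro t ht
      obtain ⟨c, hc0, hcε, -, hbook⟩ := hc t ht
      calc ‖f t‖ ≤ (p : ℝ) ^ ((m' : ℤ) - m) * ‖c‖ * ‖t‖ :=
            Padic.norm_le_zpow_mul_of_add_valuation_eq hc0 (hA0 t ht) hbook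
        _ ≤ K * ε * ‖t‖ := by gcongr; exact le_max_right _ _
        _ = ε * K * ‖t‖ := by ring
    refine IsUltrametricDist.norm_sub_le_mul_of_norm_ne_norm (by positivity) ?_
      (hf x₁ h₁) (hf x₂ h₂)
    exact (Padic.valuation_eq_iff_norm_eq (hA0 x₁ h₁) (hA0 x₂ h₂)).not.1 hv

/-- Let `A ⊆ ℚ_p^×` be a union of the maximal balls `t·(1+p^mℤ_p)` with
constant `ac_m`, and `f : A → ℚ_p^×` with constant `ac_{m'}` such that on each ball
`t·(1+p^mℤ_p)` it satisfies the Jacobian property with Jacobian `c_t`, `‖c_t‖ ≤ ε`, and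
the bookkeeping `m + v(c_t) + v(t) = m' + v(f t)`. Then `f` is globally Lipschitz on `A`
with constant `ε·max(1, p^{m'-m})`. -/
theorem stmt12 (p : ℕ) [Fact p.Prime] (ε : ℝ) (hε : 0 < ε) (m m' : ℕ)
    (hm : 1 ≤ m) (hm' : 1 ≤ m') (A : Set ℚ_[p])
    (hA0 : ∀ x ∈ A, x ≠ 0)
    (hAball : ∀ t ∈ A, ∀ w : ℚ_[p], ‖w - t‖ ≤ (p : ℝ) ^ (-(m : ℤ)) * ‖t‖ → w ∈ A)
    (hAac : ∀ x ∈ A, ∀ y ∈ A, acEq p m x y)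
    (f : ℚ_[p] → ℚ_[p])
    (hf0 : ∀ x ∈ A, f x ≠ 0)
    (hfac : ∀ x ∈ A, ∀ y ∈ A, acEq p m' (f x) (f y))
    (hc : ∀ t ∈ A, ∃ c : ℚ_[p], c ≠ 0 ∧ ‖c‖ ≤ ε ∧
      (∀ x y : ℚ_[p], ‖x - t‖ ≤ (p : ℝ) ^ (-(m : ℤ)) * ‖t‖ →
        ‖y - t‖ ≤ (p : ℝ) ^ (-(m : ℤ)) * ‖t‖ → x ≠ y →
        (f x - f y).valuation = c.valuation + (x - y).valuation) ∧
      (m : ℤ) + c.valuation + t.valuation = (m' : ℤ) + (f t).valuation) :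
    ∀ x₁ ∈ A, ∀ x₂ ∈ A,
      ‖f x₁ - f x₂‖ ≤ ε * max 1 ((p : ℝ) ^ ((m' : ℤ) - (m : ℤ))) * ‖x₁ - x₂‖ :=
  stmt12_general p ε m m' A hA0 hAac f hc
end

section
/- Let A ⊆ ℚ_p² and f : A → ℚ_p, with data as follows: suppose α : P → ℚ_p (P ⊆ ℚ_p) is C-Lipschitz with (x₁, α(x₁)) ∈ A for all x₁ ∈ P, suppose the map x₁ ↦ f(x₁, α(x₁)) is C-Lipschitz on P, suppose for each fixed x₁ ∈ P the map x₂ ↦ f(x₁, x₂) is C-Lipschitz on A_{x₁} = {x₂ : (x₁,x₂) ∈ A}, and suppose |α(x₁)|_p ≤ |x₂|_p for all (x₁, x₂) ∈ A. Then for all (a₁, a₂), (a₁', a₂') ∈ A with a₁, a₁' ∈ P and |a₂|_p ≠ |a₂'|_p, one has |f(a₁,a₂) - f(a₁',a₂')|_p ≤ C·max(|a₁ - a₁'|_p, |a₂ - a₂'|_p). -/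
/-- the 'path of jumps' estimate (Case 1 of the two-variable main theorem).
Given `A ⊆ ℚ_p²`, `P ⊆ ℚ_p`, a `C`-Lipschitz boundary `α : P → ℚ_p` with graph in `A`,
`x₁ ↦ f(x₁, α(x₁))` `C`-Lipschitz on `P`, `f` `C`-Lipschitz in the second variable on
each fiber, and `‖α(x₁)‖ ≤ ‖x₂‖` on `A`: then for points of `A` over `P` with
`‖a₂‖ ≠ ‖a₂'‖`, one has `‖f(a) - f(a')‖ ≤ C · max(‖a₁-a₁'‖, ‖a₂-a₂'‖)`. -/
theorem stmt14 (p : ℕ) [Fact p.Prime] (A : Set (ℚ_[p] × ℚ_[p])) (P : Set ℚ_[p])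
    (α : ℚ_[p] → ℚ_[p]) (f : ℚ_[p] × ℚ_[p] → ℚ_[p]) (C : ℝ)
    (hαA : ∀ x₁ ∈ P, (x₁, α x₁) ∈ A)
    (hαLip : ∀ x₁ ∈ P, ∀ x₁' ∈ P, ‖α x₁ - α x₁'‖ ≤ C * ‖x₁ - x₁'‖)
    (hdiag : ∀ x₁ ∈ P, ∀ x₁' ∈ P,
      ‖f (x₁, α x₁) - f (x₁', α x₁')‖ ≤ C * ‖x₁ - x₁'‖)
    (hvert : ∀ x₁ x₂ x₂' : ℚ_[p], (x₁, x₂) ∈ A → (x₁, x₂') ∈ A →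
      ‖f (x₁, x₂) - f (x₁, x₂')‖ ≤ C * ‖x₂ - x₂'‖)
    (hbound : ∀ a ∈ A, ‖α (a : ℚ_[p] × ℚ_[p]).1‖ ≤ ‖(a : ℚ_[p] × ℚ_[p]).2‖) :
    ∀ a ∈ A, ∀ a' ∈ A, (a : ℚ_[p] × ℚ_[p]).1 ∈ P → (a' : ℚ_[p] × ℚ_[p]).1 ∈ P →
      ‖a.2‖ ≠ ‖a'.2‖ →
      ‖f a - f a'‖ ≤ C * max ‖a.1 - a'.1‖ ‖a.2 - a'.2‖ := by
  intro a ha a' ha' hP hP' hne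
  obtain ⟨a₁, a₂⟩ := a
  obtain ⟨a₁', a₂'⟩ := a'
  simp only at *
  by_cases h1 : a₁ = a₁'
  · subst h1
    have := hvert a₁ a₂ a₂' ha ha'
    have hm : max ‖a₁ - a₁‖ ‖a₂ - a₂'‖ = ‖a₂ - a₂'‖ := by
      simp [max_eq_right (norm_nonneg _)]
    rw [hm]
    exact this
  · have hpos : 0 < ‖a₁ - a₁'‖ := by
      rw [norm_pos_iff]
      exact sub_ne_zero_of_ne h1
    have hC : 0 ≤ C := by
      have h := (norm_nonneg (α a₁ - α a₁')).trans (hαLip a₁ hP a₁' hP')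
      nlinarith
    -- key: ‖a₂ - a₂'‖ = max ‖a₂‖ ‖a₂'‖
    have hkey : ‖a₂ - a₂'‖ = max ‖a₂‖ ‖a₂'‖ := by
      have : ‖a₂ + (-a₂')‖ = max ‖a₂‖ ‖-a₂'‖ := by
        apply Padic.add_eq_max_of_ne
        simpa using hne
      simpa [sub_eq_add_neg] using this
    have hRmax : C * max ‖a₁ - a₁'‖ ‖a₂ - a₂'‖ = max (C * ‖a₁ - a₁'‖) (C * ‖a₂ - a₂'‖) := by
      rw [mul_max_of_nonneg _ _ hC]
    set t1 := f (a₁, a₂) - f (a₁, α a₁)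
    set t2 := f (a₁, α a₁) - f (a₁', α a₁')
    set t3 := f (a₁', α a₁') - f (a₁', a₂')
    have heq : f (a₁, a₂) - f (a₁', a₂') = t1 + (t2 + t3) := by ring
    have b1 : ‖t1‖ ≤ C * ‖a₂ - a₂'‖ := by
      have h := hvert a₁ a₂ (α a₁) ha (hαA a₁ hP)
      refine h.trans (mul_le_mul_of_nonneg_left ?_ hC)
      have : ‖a₂ + (-α a₁)‖ ≤ max ‖a₂‖ ‖-α a₁‖ := Padic.nonarchimedean _ _
      rw [hkey]
      have hb := hbound (a₁, a₂) ha
      calc ‖a₂ - α a₁‖ ≤ max ‖a₂‖ ‖α a₁‖ := by simpa [sub_eq_add_neg] using this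
        _ ≤ ‖a₂‖ := by simp [max_le_iff, hb]
        _ ≤ max ‖a₂‖ ‖a₂'‖ := le_max_left _ _
    have b3 : ‖t3‖ ≤ C * ‖a₂ - a₂'‖ := by
      have h := hvert a₁' (α a₁') a₂' (hαA a₁' hP') ha'
      refine h.trans (mul_le_mul_of_nonneg_left ?_ hC)
      have : ‖α a₁' + (-a₂')‖ ≤ max ‖α a₁'‖ ‖-a₂'‖ := Padic.nonarchimedean _ _
      rw [hkey]
      have hb := hbound (a₁', a₂') ha'
      calc ‖α a₁' - a₂'‖ ≤ max ‖α a₁'‖ ‖a₂'‖ := by simpa [sub_eq_add_neg] using this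
        _ ≤ ‖a₂'‖ := by simp [max_le_iff, hb]
        _ ≤ max ‖a₂‖ ‖a₂'‖ := le_max_right _ _
    have b2 : ‖t2‖ ≤ C * ‖a₁ - a₁'‖ := hdiag a₁ hP a₁' hP'
    rw [heq, hRmax]
    have h23 : ‖t2 + t3‖ ≤ max ‖t2‖ ‖t3‖ := Padic.nonarchimedean _ _
    have h123 : ‖t1 + (t2 + t3)‖ ≤ max ‖t1‖ ‖t2 + t3‖ := Padic.nonarchimedean _ _
    refine h123.trans (max_le ?_ (h23.trans (max_le ?_ ?_)))
    · exact b1.trans (le_max_right _ _)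
    · exact b2.trans (le_max_left _ _)
    · exact b3.trans (le_max_right _ _)
end
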